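/- The average pairwise distance does not satisfy the uniqueness property: there exists a set of 4 distinct real numbers such that replacing one of its elements with a duplicate of another element strictly increases the average pairwise distance (with distances induced from the real line). -/

import Mathlib

/-! Take S = {0, 10, 11, 12} and replace 10 by a copy of 0. The pair (10, 0) loses its distance 10,
but the distances to 11 and 12 grow by 10 each, so the sum of pairwise distances rises from 37
to 47. -/

open Finset

/-- Average pairwise distance of a 4-tuple of reals (distance induced from the real line). -/
noncomputable def avg4 (f : Fin 4 → ℝ) : ℝ :=
  (2 / ((4 : ℝ) * 3)) * ∑ i, ∑ j ∈ Finset.univ.filter (fun j : Fin 4 => i < j), |f i - f j|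

lemma avg4_eq_sum_pairs (f : Fin 4 → ℝ) : avg4 f =
    (|f 0 - f 1| + |f 0 - f 2| + |f 0 - f 3| + |f 1 - f 2| + |f 1 - f 3| + |f 2 - f 3|) / 6 := by
  have h0 : univ.filter (fun j : Fin 4 => 0 < j) = {1, 2, 3} := by decide
  have h1 : univ.filter (fun j : Fin 4 => 1 < j) = {2, 3} := by decide
  have h2 : univ.filter (fun j : Fin 4 => 2 < j) = {3} := by decide
  have h3 : univ.filter (fun j : Fin 4 => 3 < j) = ∅ := by decide
  rw [avg4, Fin.sum_univ_four, h0, h1, h2, h3]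
  simp only [sum_insert, sum_singleton, sum_empty, mem_insert, mem_singleton,
    Fin.reduceEq, or_self, not_false_eq_true]
  ring

lemma avg4_vec_0_10_11_12 : avg4 ![0, 10, 11, 12] = 37 / 6 := by
  norm_num [avg4_eq_sum_pairs, Matrix.cons_val_two, Matrix.cons_val_three]

lemma avg4_vec_0_0_11_12 : avg4 ![0, 0, 11, 12] = 47 / 6 := by
  norm_num [avg4_eq_sum_pairs, Matrix.cons_val_two, Matrix.cons_val_three]

lemma injective_vec_0_10_11_12 : Function.Injective (![0, 10, 11, 12] : Fin 4 → ℝ) := by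
  refine StrictMono.injective (Fin.strictMono_iff_lt_succ.2 fun i => ?_)
  fin_cases i <;> norm_num [Matrix.cons_val_two]

/-- The average pairwise distance does not satisfy uniqueness: there is a 4-tuple of
distinct reals such that replacing one element by a duplicate of another strictly
increases the average pairwise distance. -/
theorem average_not_unique :
    ∃ x : Fin 4 → ℝ, Function.Injective x ∧
      ∃ i j : Fin 4, i ≠ j ∧ avg4 x < avg4 (Function.update x i (x j)) := by
  refine ⟨![0, 10, 11, 12], injective_vec_0_10_11_12, 1, 0, by decide, ?_⟩
  have h_update :
      Function.update ![0, 10, 11, 12] 1 (![0, 10, 11, 12] 0) = ![(0 : ℝ), 0, 11, 12] := by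
    ext k
    fin_cases k <;> rfl
  rw [h_update, avg4_vec_0_10_11_12, avg4_vec_0_0_11_12]
  norm_num
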